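/- The refined relation G_{(4,0,1)}(z,q) = G_{(3,1,1)}(zq,q) + zq·G_{(4,1,0)}(zq^2,q), where for each profile c, G_c(z,q) := (zq;q)_∞ F_c(z,q) and F_c is the two-variable generating function of cylindric partitions of profile c. -/

import Mathlib

open scoped Finset

/-- A cylindric partition with profile `c = (c₁, …, c_k)` (0-indexed): a `k`-tuple of
partitions `λ⁽ⁱ⁾` (antitone, eventually-zero sequences of naturals, 0-indexed) with
`λ⁽ⁱ⁾ⱼ ≥ λ⁽ⁱ⁺¹⁾_{j + c_{i+1}}` cyclically. -/
structure CylindricPartition (k : ℕ) [NeZero k] (c : Fin k → ℕ) where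
  part : Fin k → ℕ → ℕ
  antitone : ∀ i, Antitone (part i)
  finite_support : ∀ i, ∃ N, ∀ j, N ≤ j → part i j = 0
  cyl : ∀ i j, part (i + 1) (j + c (i + 1)) ≤ part i j

namespace CylindricPartition

variable {k : ℕ} [NeZero k] {c : Fin k → ℕ}

/-- The size `|Λ|`: the sum of all parts. -/
noncomputable def size (Λ : CylindricPartition k c) : ℕ :=
  ∑' (i : Fin k) (j : ℕ), Λ.part i j

/-- The largest part `max(Λ)`. -/
def maxPart (Λ : CylindricPartition k c) : ℕ :=
  Finset.univ.sup fun i => Λ.part i 0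

end CylindricPartition
noncomputable instance : TopologicalSpace (MvPowerSeries (Fin 2) ℚ) :=
  Pi.topologicalSpace (ι := Fin 2 →₀ ℕ) (Y := fun _ => ℚ)

/-- The formal variable `z`. -/
noncomputable def z : MvPowerSeries (Fin 2) ℚ := MvPowerSeries.X 0

/-- The formal variable `q`. -/
noncomputable def q : MvPowerSeries (Fin 2) ℚ := MvPowerSeries.X 1

/-- The two-variable generating function of cylindric partitions of profile `c`, evaluated at
an arbitrary first argument `Z`:  `F_c(Z, q) = Σ_Λ Z^{max(Λ)} q^{|Λ|}`. -/
noncomputable def cylGF (k : ℕ) [NeZero k] (c : Fin k → ℕ) (Z : MvPowerSeries (Fin 2) ℚ) :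
    MvPowerSeries (Fin 2) ℚ :=
  ∑' Λ : CylindricPartition k c, Z ^ Λ.maxPart * q ^ Λ.size

/-- `G_c(Z, q) := (Zq; q)_∞ F_c(Z, q)`. -/
noncomputable def cylG (k : ℕ) [NeZero k] (c : Fin k → ℕ) (Z : MvPowerSeries (Fin 2) ℚ) :
    MvPowerSeries (Fin 2) ℚ :=
  (∏' m : ℕ, (1 - Z * q ^ (m + 1))) * cylGF k c Z

/-!
Let `V_c(Z) = Σ Z^T q^{|Λ|}` over cylindric partitions `Λ` of profile `c` and caps `T ≥ max(Λ)`,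
so that `F_c(Z) = (1 - Z) V_c(Z)`. If the largest part of `Λ` is the first part of component `i₀`,
deleting that row moves one unit of the profile from `c_{i₀}` to `c_{i₀+1}`, lowers `|Λ|` by
`max(Λ)` and leaves a partition capped by `max(Λ)`; this identifies such partitions of profile `c`
with capped partitions of the new profile, evaluated at `Zq` instead of `Z`. In profile `(5,0,0)`
the largest part is always the first part of component 0, so `F_{500}(Z) = V_{410}(Zq)`; in
profile `(4,0,1)` it is there or else in component 2, so
`F_{401}(Z) = V_{311}(Zq) + Zq V_{500}(Zq)`. Since `(Zq;q)_∞ = (1 - Zq)(Zq²;q)_∞`, multiplying by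
these products turns the two identities into the relation.
-/

open MvPowerSeries

instance : IsTopologicalSemiring (MvPowerSeries (Fin 2) ℚ) :=
  WithPiTopology.instIsTopologicalSemiring (Fin 2) ℚ

instance : T2Space (MvPowerSeries (Fin 2) ℚ) := WithPiTopology.instT2Space

namespace CylindricPartition

variable {k : ℕ} [NeZero k] {c : Fin k → ℕ}

@[ext]
theorem ext {Λ Μ : CylindricPartition k c} (h : Λ.part = Μ.part) : Λ = Μ := by
  cases Λ; cases Μ; cases h; rfl

theorem summable_part (Λ : CylindricPartition k c) (i : Fin k) : Summable (Λ.part i) := by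
  obtain ⟨N, hN⟩ := Λ.finite_support i
  exact summable_of_ne_finset_zero (s := Finset.range N) fun j hj => hN j (by simpa using hj)

theorem size_eq_sum_tsum (Λ : CylindricPartition k c) :
    Λ.size = ∑ i, ∑' j, Λ.part i j :=
  tsum_fintype _

theorem tsum_part_le_size (Λ : CylindricPartition k c) (i : Fin k) :
    ∑' j, Λ.part i j ≤ Λ.size := by
  rw [size_eq_sum_tsum]
  exact Finset.single_le_sum (f := fun i => ∑' j, Λ.part i j) (fun _ _ => Nat.zero_le _)
    (Finset.mem_univ i)

theorem part_le_size (Λ : CylindricPartition k c) (i : Fin k) (j : ℕ) : Λ.part i j ≤ Λ.size :=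
  ((Λ.summable_part i).le_tsum j fun _ _ => Nat.zero_le _).trans (Λ.tsum_part_le_size i)

theorem part_eq_zero_of_size_le (Λ : CylindricPartition k c) (i : Fin k) {j : ℕ}
    (hj : Λ.size ≤ j) : Λ.part i j = 0 := by
  by_contra hne
  have hpos : ∀ j' ∈ Finset.range (j + 1), 1 ≤ Λ.part i j' := fun j' hj' =>
    (Nat.one_le_iff_ne_zero.2 hne).trans (Λ.antitone i (Finset.mem_range_succ_iff.1 hj'))
  have := calc j + 1 = ∑ _j' ∈ Finset.range (j + 1), 1 := by simp
    _ ≤ ∑ j' ∈ Finset.range (j + 1), Λ.part i j' := Finset.sum_le_sum hpos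
    _ ≤ ∑' j', Λ.part i j' := (Λ.summable_part i).sum_le_tsum _ fun _ _ => Nat.zero_le _
    _ ≤ Λ.size := Λ.tsum_part_le_size i
  omega

theorem finite_setOf_size_le (n : ℕ) : {Λ : CylindricPartition k c | Λ.size ≤ n}.Finite := by
  let restrict (Λ : CylindricPartition k c) : Fin k → Fin n → ℕ := fun i j => Λ.part i j
  refine Set.Finite.of_finite_image (f := restrict) ?_ ?_
  · refine (Set.Finite.pi fun _ => Set.Finite.pi fun _ => Set.finite_Iic n).subset ?_
    rintro _ ⟨Λ, hΛ, rfl⟩ i - j -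
    exact (Λ.part_le_size i j).trans hΛ
  · intro Λ hΛ Μ hΜ h
    ext i j
    by_cases hj : j < n
    · exact congrFun (congrFun h i) ⟨j, hj⟩
    · rw [Λ.part_eq_zero_of_size_le i (le_trans hΛ (not_lt.1 hj)),
        Μ.part_eq_zero_of_size_le i (le_trans hΜ (not_lt.1 hj))]

theorem part_zero_le_maxPart (Λ : CylindricPartition k c) (i : Fin k) :
    Λ.part i 0 ≤ Λ.maxPart :=
  Finset.le_sup (f := fun i => Λ.part i 0) (Finset.mem_univ i)

theorem maxPart_le_iff {Λ : CylindricPartition k c} {T : ℕ} :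
    Λ.maxPart ≤ T ↔ ∀ i, Λ.part i 0 ≤ T := by
  simp [maxPart]

theorem exists_part_zero_eq_maxPart (Λ : CylindricPartition k c) :
    ∃ i, Λ.part i 0 = Λ.maxPart := by
  obtain ⟨i, -, hi⟩ := Finset.exists_mem_eq_sup Finset.univ Finset.univ_nonempty
    fun i => Λ.part i 0
  exact ⟨i, hi.symm⟩

theorem part_succ_zero_le (Λ : CylindricPartition k c) {i : Fin k} (hc : c (i + 1) = 0) :
    Λ.part (i + 1) 0 ≤ Λ.part i 0 := by
  simpa [hc] using Λ.cyl i 0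

end CylindricPartition

/-- `c'` is `c` with one unit moved from position `i₀` to `i₀ + 1`: this is what deleting the
first row of component `i₀` does to the profile. -/
structure ProfileShift {k : ℕ} [NeZero k] (c c' : Fin k → ℕ) (i₀ : Fin k) : Prop where
  self : c i₀ = c' i₀ + 1
  succ : c' (i₀ + 1) = c (i₀ + 1) + 1
  other : ∀ i, i ≠ i₀ → i ≠ i₀ + 1 → c' i = c i

theorem ProfileShift.succ_ne {k : ℕ} [NeZero k] {c c' : Fin k → ℕ} {i₀ : Fin k}
    (h : ProfileShift c c' i₀) : i₀ + 1 ≠ i₀ := by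
  intro he
  have h₁ := h.self
  have h₂ := h.succ
  rw [he] at h₂
  omega

namespace CylindricPartition

variable {k : ℕ} [NeZero k] {c c' : Fin k → ℕ} {i₀ : Fin k}

def dropRow (h : ProfileShift c c' i₀) (Λ : CylindricPartition k c) :
    CylindricPartition k c' where
  part i j := if i = i₀ then Λ.part i₀ (j + 1) else Λ.part i j
  antitone i a b hab := by
    split_ifs
    · exact Λ.antitone i₀ (Nat.add_le_add_right hab 1)
    · exact Λ.antitone i hab
  finite_support i := by
    obtain ⟨N, hN⟩ := Λ.finite_support i
    refine ⟨N, fun j hj => ?_⟩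
    split_ifs with hi
    · subst hi
      exact hN _ (by omega)
    · exact hN j hj
  cyl i j := by
    by_cases hi : i = i₀
    · subst hi
      rw [if_neg h.succ_ne, if_pos rfl, h.succ, ← add_assoc, add_right_comm]
      exact Λ.cyl i (j + 1)
    · by_cases hi₁ : i + 1 = i₀
      · subst hi₁
        rw [if_pos rfl, if_neg hi, add_assoc, ← h.self]
        exact Λ.cyl i j
      · rw [if_neg hi₁, if_neg hi, h.other _ hi₁ (fun he => hi (add_right_cancel he))]
        exact Λ.cyl i j

def consRow (h : ProfileShift c c' i₀) (Λ : CylindricPartition k c') (T : ℕ)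
    (hT : Λ.maxPart ≤ T) : CylindricPartition k c where
  part i j := if i = i₀ then (match j with | 0 => T | j + 1 => Λ.part i₀ j) else Λ.part i j
  antitone i := by
    split_ifs with hi
    · refine antitone_nat_of_succ_le fun j => ?_
      cases j with
      | zero => exact (Λ.part_zero_le_maxPart i₀).trans hT
      | succ j => exact Λ.antitone i₀ (Nat.le_succ j)
    · exact Λ.antitone i
  finite_support i := by
    obtain ⟨N, hN⟩ := Λ.finite_support i
    refine ⟨N + 1, fun j hj => ?_⟩
    split_ifs with hi
    · subst hi
      obtain ⟨j, rfl⟩ : ∃ j', j = j' + 1 := ⟨j - 1, by omega⟩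
      exact hN j (by omega)
    · exact hN j (by omega)
  cyl i j := by
    by_cases hi : i = i₀
    · subst hi
      rw [if_neg h.succ_ne, if_pos rfl]
      cases j with
      | zero =>
        exact (Λ.antitone _ (Nat.zero_le _)).trans ((Λ.part_zero_le_maxPart _).trans hT)
      | succ j =>
        show Λ.part (i + 1) (j + 1 + c (i + 1)) ≤ Λ.part i j
        rw [add_right_comm, add_assoc, ← h.succ]
        exact Λ.cyl i j
    · by_cases hi₁ : i + 1 = i₀
      · subst hi₁
        rw [if_pos rfl, if_neg hi, h.self, ← add_assoc]
        exact Λ.cyl i j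
      · rw [if_neg hi₁, if_neg hi, ← h.other _ hi₁ (fun he => hi (add_right_cancel he))]
        exact Λ.cyl i j

variable (h : ProfileShift c c' i₀)

@[simp]
theorem part_dropRow_self (Λ : CylindricPartition k c) (j : ℕ) :
    (dropRow h Λ).part i₀ j = Λ.part i₀ (j + 1) := by
  simp [dropRow]

@[simp]
theorem part_dropRow_of_ne (Λ : CylindricPartition k c) {i : Fin k} (hi : i ≠ i₀) (j : ℕ) :
    (dropRow h Λ).part i j = Λ.part i j := by
  simp [dropRow, hi]

@[simp]
theorem part_consRow_self_zero (Λ : CylindricPartition k c') (T : ℕ) (hT : Λ.maxPart ≤ T) :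
    (consRow h Λ T hT).part i₀ 0 = T := by
  simp [consRow]

@[simp]
theorem part_consRow_self_succ (Λ : CylindricPartition k c') (T : ℕ) (hT : Λ.maxPart ≤ T)
    (j : ℕ) : (consRow h Λ T hT).part i₀ (j + 1) = Λ.part i₀ j := by
  simp [consRow]

@[simp]
theorem part_consRow_of_ne (Λ : CylindricPartition k c') (T : ℕ) (hT : Λ.maxPart ≤ T)
    {i : Fin k} (hi : i ≠ i₀) (j : ℕ) : (consRow h Λ T hT).part i j = Λ.part i j := by
  simp [consRow, hi]

theorem dropRow_consRow (Λ : CylindricPartition k c') (T : ℕ) (hT : Λ.maxPart ≤ T) :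
    dropRow h (consRow h Λ T hT) = Λ := by
  ext i j
  by_cases hi : i = i₀
  · subst hi
    simp
  · simp [hi]

theorem consRow_dropRow (Λ : CylindricPartition k c) {T : ℕ} (hΛ : Λ.part i₀ 0 = T)
    (hT : (dropRow h Λ).maxPart ≤ T) : consRow h (dropRow h Λ) T hT = Λ := by
  ext i j
  by_cases hi : i = i₀
  · subst hi
    cases j <;> simp [hΛ]
  · simp [hi]

theorem maxPart_dropRow_le (Λ : CylindricPartition k c) :
    (dropRow h Λ).maxPart ≤ Λ.maxPart := by
  refine maxPart_le_iff.2 fun i => ?_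
  by_cases hi : i = i₀
  · subst hi
    simpa using (Λ.antitone i (Nat.zero_le 1)).trans (Λ.part_zero_le_maxPart i)
  · simpa [hi] using Λ.part_zero_le_maxPart i

theorem maxPart_consRow (Λ : CylindricPartition k c') (T : ℕ) (hT : Λ.maxPart ≤ T) :
    (consRow h Λ T hT).maxPart = T := by
  refine le_antisymm (maxPart_le_iff.2 fun i => ?_) ?_
  · by_cases hi : i = i₀
    · subst hi
      simp
    · simpa [hi] using (Λ.part_zero_le_maxPart i).trans hT
  · simpa using (consRow h Λ T hT).part_zero_le_maxPart i₀

theorem size_dropRow_add (Λ : CylindricPartition k c) :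
    (dropRow h Λ).size + Λ.part i₀ 0 = Λ.size := by
  have hrow : ∀ i, ∑' j, Λ.part i j =
      ∑' j, (dropRow h Λ).part i j + if i = i₀ then Λ.part i₀ 0 else 0 := by
    intro i
    by_cases hi : i = i₀
    · subst hi
      rw [tsum_eq_zero_add' (((dropRow h Λ).summable_part i).congr fun j => by simp)]
      simp [add_comm]
    · simp [hi]
  rw [size_eq_sum_tsum Λ, Finset.sum_congr rfl fun i _ => hrow i, Finset.sum_add_distrib,
    Finset.sum_ite_eq', if_pos (Finset.mem_univ _), size_eq_sum_tsum]

end CylindricPartition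

theorem constantCoeff_q : constantCoeff q = 0 :=
  constantCoeff_X 1

theorem summable_pow_mul_q_pow {ι : Type*} {Z : MvPowerSeries (Fin 2) ℚ}
    (hZ : constantCoeff Z = 0) (t n : ι → ℕ) (hfin : ∀ N, {i | t i + n i ≤ N}.Finite) :
    Summable fun i => Z ^ t i * q ^ n i := by
  refine WithPiTopology.summable_iff_summable_coeff.2 fun d =>
    summable_of_hasFiniteSupport ((hfin d.degree).subset fun i hi => ?_)
  by_contra hlt
  refine hi (coeff_of_lt_order ?_)
  calc (d.degree : ℕ∞) < (t i + n i : ℕ) := by exact_mod_cast not_le.1 hlt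
    _ ≤ (Z ^ t i).order + (q ^ n i).order := by
      push_cast
      exact add_le_add (le_order_pow_of_constantCoeff_eq_zero _ hZ)
        (le_order_pow_of_constantCoeff_eq_zero _ constantCoeff_q)
    _ ≤ (Z ^ t i * q ^ n i).order := le_order_mul

theorem hasSum_of_equiv_of_eq {α β M : Type*} [AddCommMonoid M] [TopologicalSpace M]
    {f : β → M} {g : α → M} {s : M} (e : α ≃ β) (h : ∀ a, g a = f (e a)) (hf : HasSum f s) :
    HasSum g s := by
  rw [show g = f ∘ e from funext h]
  exact e.hasSum_iff.2 hf

@[ext]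
structure CappedCylindricPartition (k : ℕ) [NeZero k] (c : Fin k → ℕ) where
  partition : CylindricPartition k c
  bound : ℕ
  maxPart_le : partition.maxPart ≤ bound

noncomputable def CylindricPartition.weight {k : ℕ} [NeZero k] {c : Fin k → ℕ}
    (Z : MvPowerSeries (Fin 2) ℚ) (Λ : CylindricPartition k c) : MvPowerSeries (Fin 2) ℚ :=
  Z ^ Λ.maxPart * q ^ Λ.size

noncomputable def CappedCylindricPartition.weight {k : ℕ} [NeZero k] {c : Fin k → ℕ}
    (Z : MvPowerSeries (Fin 2) ℚ) (p : CappedCylindricPartition k c) : MvPowerSeries (Fin 2) ℚ :=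
  Z ^ p.bound * q ^ p.partition.size

/-- Summing over all caps `T ≥ max(Λ)` multiplies the weight `Z ^ max(Λ)` by `1 / (1 - Z)`,
so this is `F_c(Z, q) / (1 - Z)`. -/
noncomputable def cappedGF (k : ℕ) [NeZero k] (c : Fin k → ℕ) (Z : MvPowerSeries (Fin 2) ℚ) :
    MvPowerSeries (Fin 2) ℚ :=
  ∑' p : CappedCylindricPartition k c, p.weight Z

section GeneratingFunctions

variable {k : ℕ} [NeZero k] {c : Fin k → ℕ} {Z : MvPowerSeries (Fin 2) ℚ}

theorem hasSum_weight (hZ : constantCoeff Z = 0) :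
    HasSum (fun Λ : CylindricPartition k c => Λ.weight Z) (cylGF k c Z) :=
  (summable_pow_mul_q_pow hZ _ _ fun N => (CylindricPartition.finite_setOf_size_le N).subset
    fun _ hΛ => by simp only [Set.mem_ofPred_eq] at hΛ ⊢; omega).hasSum

theorem hasSum_cappedWeight (hZ : constantCoeff Z = 0) :
    HasSum (fun p : CappedCylindricPartition k c => p.weight Z) (cappedGF k c Z) := by
  refine (summable_pow_mul_q_pow hZ _ _ fun N => ?_).hasSum
  refine (((CylindricPartition.finite_setOf_size_le N).prod (Set.finite_Iic N)).preimage
    (f := fun p : CappedCylindricPartition k c => (p.partition, p.bound)) ?_).subset ?_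
  · intro p _ p' _ hp
    simp only [Prod.mk.injEq] at hp
    exact CappedCylindricPartition.ext hp.1 hp.2
  · intro p hp
    simp only [Set.mem_ofPred_eq] at hp
    simp only [Set.mem_preimage, Set.mem_prod, Set.mem_ofPred_eq, Set.mem_Iic]
    omega

namespace CappedCylindricPartition

def maxPartEqBoundEquiv :
    {p : CappedCylindricPartition k c // p.partition.maxPart = p.bound} ≃
      CylindricPartition k c where
  toFun p := p.1.partition
  invFun Λ := ⟨⟨Λ, Λ.maxPart, le_rfl⟩, rfl⟩
  left_inv p := Subtype.ext (CappedCylindricPartition.ext rfl p.2)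
  right_inv _ := rfl

def maxPartNeBoundEquiv :
    {p : CappedCylindricPartition k c // p.partition.maxPart ≠ p.bound} ≃
      CappedCylindricPartition k c where
  toFun p := ⟨p.1.partition, p.1.bound - 1, by have := p.1.maxPart_le.lt_of_ne p.2; omega⟩
  invFun p := ⟨⟨p.partition, p.bound + 1, p.maxPart_le.trans (Nat.le_succ _)⟩, by
    have := p.maxPart_le; simp only; omega⟩
  left_inv p := Subtype.ext (CappedCylindricPartition.ext rfl
    (by have := p.1.maxPart_le.lt_of_ne p.2; simp only; omega))
  right_inv _ := rfl

end CappedCylindricPartition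

theorem cylGF_add_mul_cappedGF (hZ : constantCoeff Z = 0) :
    cylGF k c Z + Z * cappedGF k c Z = cappedGF k c Z := by
  refine HasSum.unique ?_ (hasSum_cappedWeight hZ)
  refine HasSum.add_compl (s := {p | p.partition.maxPart = p.bound}) ?_ ?_
  · refine hasSum_of_equiv_of_eq CappedCylindricPartition.maxPartEqBoundEquiv (fun p => ?_)
      (hasSum_weight hZ)
    have hp : p.1.partition.maxPart = p.1.bound := p.2
    simp [CappedCylindricPartition.weight, CylindricPartition.weight,
      CappedCylindricPartition.maxPartEqBoundEquiv, hp]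
  · refine hasSum_of_equiv_of_eq CappedCylindricPartition.maxPartNeBoundEquiv (fun p => ?_)
      ((hasSum_cappedWeight hZ).mul_left Z)
    obtain ⟨T, hT⟩ : ∃ T, p.1.bound = T + 1 :=
      ⟨p.1.bound - 1, by have := p.1.maxPart_le.lt_of_ne p.2; omega⟩
    simp only [CappedCylindricPartition.weight, CappedCylindricPartition.maxPartNeBoundEquiv,
      Function.comp_apply, Equiv.coe_fn_mk, hT, add_tsub_cancel_right, pow_succ]
    ring

theorem cylGF_eq_one_sub_mul_cappedGF (hZ : constantCoeff Z = 0) :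
    cylGF k c Z = (1 - Z) * cappedGF k c Z := by
  linear_combination cylGF_add_mul_cappedGF (c := c) hZ

end GeneratingFunctions

section DropRow

open CylindricPartition

variable {k : ℕ} [NeZero k] {c c' : Fin k → ℕ} {i₀ : Fin k}

def ProfileShift.dropRowEquiv (h : ProfileShift c c' i₀) :
    {Λ : CylindricPartition k c // Λ.part i₀ 0 = Λ.maxPart} ≃ CappedCylindricPartition k c' where
  toFun Λ := ⟨dropRow h Λ.1, Λ.1.maxPart, maxPart_dropRow_le h Λ.1⟩
  invFun p := ⟨consRow h p.partition p.bound p.maxPart_le, by simp [maxPart_consRow]⟩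
  left_inv Λ := Subtype.ext (consRow_dropRow h Λ.1 Λ.2 (maxPart_dropRow_le h Λ.1))
  right_inv p := CappedCylindricPartition.ext (dropRow_consRow h _ _ p.maxPart_le)
    (maxPart_consRow h _ _ p.maxPart_le)

/-- Deleting the first row of component `i₀` when it carries the largest part `T` removes `T`
from the size, and `Z ^ T q ^ T = (Z q) ^ T`. -/
theorem ProfileShift.hasSum_weight_part_eq_maxPart (h : ProfileShift c c' i₀)
    {Z : MvPowerSeries (Fin 2) ℚ} (hZ : constantCoeff Z = 0) :
    HasSum (fun Λ : {Λ : CylindricPartition k c // Λ.part i₀ 0 = Λ.maxPart} => Λ.1.weight Z)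
      (cappedGF k c' (Z * q)) := by
  refine hasSum_of_equiv_of_eq h.dropRowEquiv (fun Λ => ?_)
    (hasSum_cappedWeight (by simp [hZ]))
  simp only [ProfileShift.dropRowEquiv, Equiv.coe_fn_mk, CylindricPartition.weight,
    CappedCylindricPartition.weight]
  rw [← size_dropRow_add h Λ.1, Λ.2]
  ring

end DropRow

theorem multipliable_one_sub_mul_q_pow (Z : MvPowerSeries (Fin 2) ℚ) :
    Multipliable fun m : ℕ => 1 - Z * q ^ (m + 1) := by
  have hord : Filter.Tendsto (fun m : ℕ => (-(Z * q ^ (m + 1))).order) Filter.atTop (nhds ⊤) := by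
    refine ENat.tendsto_nhds_top_iff_natCast_lt.2 fun n => ?_
    filter_upwards [Filter.eventually_ge_atTop n] with m hm
    calc (n : ℕ∞) < (m + 1 : ℕ) := by exact_mod_cast Nat.lt_succ_of_le hm
      _ ≤ (q ^ (m + 1)).order := le_order_pow_of_constantCoeff_eq_zero _ constantCoeff_q
      _ ≤ Z.order + (q ^ (m + 1)).order := le_add_self
      _ ≤ (-(Z * q ^ (m + 1))).order := order_neg (Z * q ^ (m + 1)) ▸ le_order_mul
  have := WithPiTopology.multipliable_one_add_of_tendsto_order_atTop_nhds_top hord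
  simp only [← sub_eq_add_neg] at this
  exact this

theorem tprod_one_sub_mul_q_pow (Z : MvPowerSeries (Fin 2) ℚ) :
    ∏' m : ℕ, (1 - Z * q ^ (m + 1)) = (1 - Z * q) * ∏' m : ℕ, (1 - Z * q * q ^ (m + 1)) := by
  have hshift : (fun m : ℕ => 1 - Z * q ^ (m + 1 + 1)) = fun m => 1 - Z * q * q ^ (m + 1) :=
    funext fun m => by ring
  rw [tprod_eq_zero_mul' (hshift ▸ multipliable_one_sub_mul_q_pow (Z * q)), hshift, zero_add,
    pow_one]

section Profiles

open CylindricPartition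

theorem profileShift_401_311 : ProfileShift ![4, 0, 1] ![3, 1, 1] 0 := ⟨rfl, rfl, by decide⟩

theorem profileShift_401_500 : ProfileShift ![4, 0, 1] ![5, 0, 0] 2 := ⟨rfl, rfl, by decide⟩

theorem profileShift_500_410 : ProfileShift ![5, 0, 0] ![4, 1, 0] 0 := ⟨rfl, rfl, by decide⟩

theorem part_zero_eq_maxPart_500 (Λ : CylindricPartition 3 ![5, 0, 0]) :
    Λ.part 0 0 = Λ.maxPart := by
  have h₁ : Λ.part 1 0 ≤ Λ.part 0 0 := Λ.part_succ_zero_le (i := 0) rfl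
  have h₂ : Λ.part 2 0 ≤ Λ.part 1 0 := Λ.part_succ_zero_le (i := 1) rfl
  refine le_antisymm (Λ.part_zero_le_maxPart 0) (maxPart_le_iff.2 fun i => ?_)
  fin_cases i
  exacts [le_rfl, h₁, h₂.trans h₁]

theorem part_two_eq_maxPart_401 (Λ : CylindricPartition 3 ![4, 0, 1])
    (h : Λ.part 0 0 ≠ Λ.maxPart) : Λ.part 2 0 = Λ.maxPart := by
  have h₁ : Λ.part 1 0 ≤ Λ.part 0 0 := Λ.part_succ_zero_le (i := 0) rfl
  obtain ⟨i, hi⟩ := Λ.exists_part_zero_eq_maxPart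
  fin_cases i
  · exact absurd hi h
  · exact absurd (le_antisymm (Λ.part_zero_le_maxPart 0) (hi ▸ h₁)) h
  · exact hi

theorem cylGF_500 {Z : MvPowerSeries (Fin 2) ℚ} (hZ : constantCoeff Z = 0) :
    cylGF 3 ![5, 0, 0] Z = cappedGF 3 ![4, 1, 0] (Z * q) := by
  have h := profileShift_500_410.hasSum_weight_part_eq_maxPart hZ
  exact (hasSum_weight hZ).unique
    ((Equiv.subtypeUnivEquiv part_zero_eq_maxPart_500).hasSum_iff.1 h)

/-- When the largest part of a partition of profile `(4,0,1)` is not in component 0, it is the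
first part of component 2; deleting that row leaves a partition of profile `(5,0,0)` whose largest
part is strictly smaller, so `max(Λ) - 1` caps it. -/
def dropRowTwoEquiv :
    {Λ : CylindricPartition 3 ![4, 0, 1] // Λ.part 0 0 ≠ Λ.maxPart} ≃
      CappedCylindricPartition 3 ![5, 0, 0] where
  toFun Λ := ⟨dropRow profileShift_401_500 Λ.1, Λ.1.maxPart - 1, by
    rw [← part_zero_eq_maxPart_500, part_dropRow_of_ne _ _ (by decide)]
    have := (Λ.1.part_zero_le_maxPart 0).lt_of_ne Λ.2
    omega⟩
  invFun p := ⟨consRow profileShift_401_500 p.partition (p.bound + 1)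
      (p.maxPart_le.trans (Nat.le_succ _)), by
    rw [part_consRow_of_ne _ _ _ _ (by decide), maxPart_consRow]
    have := p.partition.part_zero_le_maxPart 0
    have := p.maxPart_le
    omega⟩
  left_inv Λ := by
    have h₂ := part_two_eq_maxPart_401 Λ.1 Λ.2
    have := (Λ.1.part_zero_le_maxPart 0).lt_of_ne Λ.2
    exact Subtype.ext (consRow_dropRow profileShift_401_500 Λ.1 (T := Λ.1.maxPart - 1 + 1)
      (by omega) ((maxPart_dropRow_le profileShift_401_500 Λ.1).trans (by omega)))
  right_inv p := CappedCylindricPartition.ext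
    (dropRow_consRow profileShift_401_500 _ _ (p.maxPart_le.trans (Nat.le_succ _)))
    (by simp [maxPart_consRow])

theorem hasSum_weight_part_zero_ne_maxPart_401 {Z : MvPowerSeries (Fin 2) ℚ}
    (hZ : constantCoeff Z = 0) :
    HasSum (fun Λ : {Λ : CylindricPartition 3 ![4, 0, 1] // Λ.part 0 0 ≠ Λ.maxPart} =>
      Λ.1.weight Z) (Z * q * cappedGF 3 ![5, 0, 0] (Z * q)) := by
  refine hasSum_of_equiv_of_eq dropRowTwoEquiv (fun Λ => ?_)
    ((hasSum_cappedWeight (by simp [hZ])).mul_left (Z * q))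
  have h₂ := part_two_eq_maxPart_401 Λ.1 Λ.2
  obtain ⟨T, hT⟩ : ∃ T, Λ.1.maxPart = T + 1 :=
    ⟨Λ.1.maxPart - 1, by have := (Λ.1.part_zero_le_maxPart 0).lt_of_ne Λ.2; omega⟩
  simp only [dropRowTwoEquiv, Equiv.coe_fn_mk, CylindricPartition.weight,
    CappedCylindricPartition.weight]
  rw [← size_dropRow_add profileShift_401_500 Λ.1, h₂, hT, Nat.add_sub_cancel]
  ring

theorem cylGF_401 {Z : MvPowerSeries (Fin 2) ℚ} (hZ : constantCoeff Z = 0) :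
    cylGF 3 ![4, 0, 1] Z = cappedGF 3 ![3, 1, 1] (Z * q) + Z * q * cappedGF 3 ![5, 0, 0] (Z * q) :=
  (hasSum_weight hZ).unique ((profileShift_401_311.hasSum_weight_part_eq_maxPart hZ).add_compl
    (hasSum_weight_part_zero_ne_maxPart_401 hZ))

end Profiles

/-- The refined relation `G_{(4,0,1)}(z,q) = G_{(3,1,1)}(zq,q) + zq·G_{(4,1,0)}(zq²,q)`. -/
theorem cylG_401_rel :
    cylG 3 ![4, 0, 1] z
      = cylG 3 ![3, 1, 1] (z * q) + z * q * cylG 3 ![4, 1, 0] (z * q ^ 2) := by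
  have hz : constantCoeff z = 0 := constantCoeff_X 0
  have hzq : constantCoeff (z * q) = 0 := by simp [hz]
  have hzqq : constantCoeff (z * q * q) = 0 := by simp [hz]
  rw [show z * q ^ 2 = z * q * q by ring]
  simp only [cylG]
  rw [tprod_one_sub_mul_q_pow z, tprod_one_sub_mul_q_pow (z * q), cylGF_401 hz,
    cylGF_eq_one_sub_mul_cappedGF (c := ![3, 1, 1]) hzq,
    cylGF_eq_one_sub_mul_cappedGF (c := ![4, 1, 0]) hzqq, ← cylGF_500 hzq,
    cylGF_eq_one_sub_mul_cappedGF (c := ![5, 0, 0]) hzq]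
  ring
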